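/- arXiv:1802.08162 — 3 statements merged into one kernel-verified Lean document; each statement's English description precedes it below -/
import Mathlib

section
/- The number of elements of order 2 in the projective special linear group PSL(3,4) is 315. -/
/-- PSL(3,4): the projective special linear group of degree 3 over the field with 4 elements. -/
def PSL34 : Type :=
  Matrix.SpecialLinearGroup (Fin 3) (GaloisField 2 2) ⧸
    Subgroup.center (Matrix.SpecialLinearGroup (Fin 3) (GaloisField 2 2))

noncomputable instance : Group PSL34 :=
  inferInstanceAs (Group (Matrix.SpecialLinearGroup (Fin 3) (GaloisField 2 2) ⧸
    Subgroup.center (Matrix.SpecialLinearGroup (Fin 3) (GaloisField 2 2))))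

/-!
The center of `SL(3, 𝔽₄)` consists of the three scalar matrices `ω • 1` with `ω³ = 1`; since it
has odd order, every involution of `PSL(3, 4)` lifts to a unique involution of `SL(3, 𝔽₄)`. In
characteristic two, `A ↦ A + 1` turns the involutions of `SL(3, 𝔽₄)` into the nonzero matrices `N`
with `N² = 0`. Such an `N` has rank one, so `N = u wᵀ` with `w ⬝ u = 0`, the pair `(u, w)` being
unique up to `(c u, c⁻¹ w)`. There are `(4³ - 1)(4² - 1) = 945` such pairs, hence `945 / 3 = 315`
matrices `N`.
-/

open Matrix Module

theorem eq_one_of_pow_eq_one_of_sq_eq_one {M : Type*} [Monoid M] {x : M} {n : ℕ} (hn : Odd n)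
    (hxn : x ^ n = 1) (hx2 : x ^ 2 = 1) : x = 1 := by
  rw [← pow_one x, ← hn.coprime_two_right.gcd_eq_one, pow_gcd_eq_one]
  exact ⟨hxn, hx2⟩

theorem card_orderOf_eq_two_quotient_center {G : Type*} [Group G] {n : ℕ} (hn : Odd n)
    (hZ : ∀ z ∈ Subgroup.center G, z ^ n = 1) :
    Nat.card {x : G ⧸ Subgroup.center G // orderOf x = 2} = Nat.card {x : G // orderOf x = 2} := by
  simp only [orderOf_eq_prime_iff]
  symm
  refine Nat.card_eq_of_bijective (fun x => ⟨x.1, ?_, ?_⟩) ⟨?_, ?_⟩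
  · rw [← QuotientGroup.mk_pow, x.2.1, QuotientGroup.mk_one]
  · exact fun h => x.2.2 <|
      eq_one_of_pow_eq_one_of_sq_eq_one hn (hZ _ ((QuotientGroup.eq_one_iff _).mp h)) x.2.1
  · rintro ⟨x, hx2, _⟩ ⟨y, hy2, _⟩ hxy
    have hz : x⁻¹ * y ∈ Subgroup.center G := QuotientGroup.eq.mp (congrArg Subtype.val hxy)
    have hx : x⁻¹ = x := inv_eq_of_mul_eq_one_left (by rw [← sq, hx2])
    have hz2 : (x⁻¹ * y) ^ 2 = 1 := by
      have hyz : y * (x * y) = x * y * y := by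
        simpa only [hx] using Subgroup.mem_center_iff.mp hz y
      rw [hx, sq]
      calc x * y * (x * y) = x * (y * (x * y)) := by simp only [mul_assoc]
        _ = x * x * (y * y) := by rw [hyz]; simp only [mul_assoc]
        _ = 1 := by rw [← sq, ← sq, hx2, hy2, one_mul]
    exact Subtype.ext (inv_mul_eq_one.mp (eq_one_of_pow_eq_one_of_sq_eq_one hn (hZ _ hz) hz2))
  · rintro ⟨q, hq2, hq1⟩
    induction q using QuotientGroup.induction_on with | H x => ?_
    have hx2 : x ^ 2 ∈ Subgroup.center G := (QuotientGroup.eq_one_iff _).mp hq2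
    obtain ⟨k, rfl⟩ := hn
    -- `x ^ n` lifts `x`, and `(x ^ n) ^ 2 = (x ^ 2) ^ n = 1`
    have hlift : ((x ^ (2 * k + 1) : G) : G ⧸ Subgroup.center G) = x := by
      rw [pow_succ', pow_mul, QuotientGroup.mk_mul, QuotientGroup.mk_pow,
        (QuotientGroup.eq_one_iff _).mpr hx2, one_pow, mul_one]
    refine ⟨⟨x ^ (2 * k + 1), ?_, fun h => hq1 ?_⟩, Subtype.ext hlift⟩
    · rw [← pow_mul, mul_comm, pow_mul, hZ _ hx2]
    · rw [← hlift, h, QuotientGroup.mk_one]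

theorem Matrix.SpecialLinearGroup.pow_card_eq_one_of_mem_center {n R : Type*} [DecidableEq n]
    [Fintype n] [CommRing R] {A : SpecialLinearGroup n R}
    (hA : A ∈ Subgroup.center (SpecialLinearGroup n R)) : A ^ Fintype.card n = 1 := by
  obtain ⟨r, hr, hrA⟩ := SpecialLinearGroup.mem_center_iff.mp hA
  ext : 1
  rw [SpecialLinearGroup.coe_pow, ← hrA, ← map_pow, hr, map_one, SpecialLinearGroup.coe_one]

theorem CharTwo.card_mul_self_eq_one_eq_card_mul_self_eq_zero (R : Type*) [Ring R] [CharP R 2] :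
    Nat.card {a : R // a * a = 1 ∧ a ≠ 1} = Nat.card {b : R // b * b = 0 ∧ b ≠ 0} := by
  refine Nat.card_congr ((Equiv.addRight 1).subtypeEquiv fun a => ?_)
  have hsq : (a + 1) * (a + 1) = a * a + 1 := by
    rw [add_mul, mul_add, mul_add, mul_one, one_mul, one_mul, add_assoc, ← add_assoc a,
      CharTwo.add_self_eq_zero, zero_add]
  simp only [Equiv.coe_addRight, hsq, ne_eq, CharTwo.add_eq_zero]

theorem Matrix.SpecialLinearGroup.card_orderOf_eq_two_of_charP_two {n R : Type*} [DecidableEq n]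
    [Fintype n] [CommRing R] [NoZeroDivisors R] [CharP R 2] :
    Nat.card {g : SpecialLinearGroup n R // orderOf g = 2} =
      Nat.card {A : Matrix n n R // A * A = 1 ∧ A ≠ 1} := by
  have hdet {A : Matrix n n R} (hA : A * A = 1) : A.det = 1 := by
    have : A.det * A.det = 1 := by rw [← det_mul, hA, det_one]
    simpa only [CharTwo.neg_eq, or_self] using mul_self_eq_one_iff.mp this
  simp only [orderOf_eq_prime_iff]
  refine Nat.card_congr
    { toFun g := ⟨g.1, ?_, fun h => g.2.2 (Subtype.ext h)⟩
      invFun A := ⟨⟨A.1, hdet A.2.1⟩, ?_, fun h => A.2.2 (congrArg Subtype.val h)⟩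
      left_inv _ := rfl
      right_inv _ := rfl }
  · rw [← SpecialLinearGroup.coe_mul, ← sq, g.2.1, SpecialLinearGroup.coe_one]
  · exact (sq _).trans (Subtype.ext A.2.1)

theorem LinearMap.two_mul_finrank_range_le_of_comp_self_eq_zero {K V : Type*} [DivisionRing K]
    [AddCommGroup V] [Module K V] [FiniteDimensional K V] {f : V →ₗ[K] V} (hf : f ∘ₗ f = 0) :
    2 * finrank K (range f) ≤ finrank K V := by
  have := Submodule.finrank_mono (LinearMap.range_le_ker_iff.mpr hf)
  have := f.finrank_range_add_finrank_ker
  omega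

theorem Matrix.exists_eq_vecMulVec_of_mul_self_eq_zero {n K : Type*} [Fintype n] [Field K]
    {N : Matrix n n K} (hn : Fintype.card n ≤ 3) (hN : N * N = 0) :
    ∃ u w : n → K, N = vecMulVec u w := by
  classical
  have hrank : finrank K (LinearMap.range N.mulVecLin) ≤ 1 := by
    have := LinearMap.two_mul_finrank_range_le_of_comp_self_eq_zero
      (f := N.mulVecLin) (by rw [← mulVecLin_mul, hN, mulVecLin_zero])
    rw [finrank_fintype_fun_eq_card] at this
    omega
  obtain ⟨v, hv⟩ := finrank_le_one_iff.mp hrank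
  choose c hc using fun j => hv ⟨N.col j, N.mulVec_single_one j ▸ LinearMap.mem_range_self _ _⟩
  refine ⟨v, c, ext fun i j => ?_⟩
  rw [vecMulVec_apply, mul_comm, ← col_apply N j i]
  exact (congrArg (fun x => x.1 i) (hc j)).symm

theorem Matrix.vecMulVec_eq_vecMulVec_iff {m n K : Type*} [Field K] {u u' : m → K}
    {w w' : n → K} (hu : u ≠ 0) (hw : w ≠ 0) :
    vecMulVec u' w' = vecMulVec u w ↔ ∃ c : Kˣ, u' = c • u ∧ w' = c⁻¹ • w := by
  constructor
  · intro h
    have huw i j : u' i * w' j = u i * w j := by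
      simpa only [vecMulVec_apply] using congrFun (congrFun h i) j
    obtain ⟨i, hi⟩ : ∃ i, u i ≠ 0 := Function.ne_iff.mp hu
    obtain ⟨j, hj⟩ : ∃ j, w j ≠ 0 := Function.ne_iff.mp hw
    have hu'i : u' i ≠ 0 := left_ne_zero_of_mul (huw i j ▸ mul_ne_zero hi hj)
    have hw'j : w' j ≠ 0 := right_ne_zero_of_mul (huw i j ▸ mul_ne_zero hi hj)
    refine ⟨Units.mk0 (w j / w' j) (div_ne_zero hj hw'j), funext fun k => ?_, funext fun k => ?_⟩
    · simp only [Pi.smul_apply, Units.smul_mk0, smul_eq_mul]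
      field_simp
      linear_combination huw k j
    · have hu' : u' i = w j / w' j * u i := by field_simp; linear_combination huw i j
      simp only [Pi.smul_apply, Units.smul_def, Units.val_inv_eq_inv_val, Units.val_mk0,
        smul_eq_mul]
      rw [inv_div]
      apply mul_left_cancel₀ hu'i
      rw [huw i k, hu']
      field_simp
  · rintro ⟨c, rfl, rfl⟩
    rw [smul_vecMulVec, vecMulVec_smul, smul_smul, mul_inv_cancel, one_smul]

theorem Nat.card_subtype_ne {α : Type*} [Finite α] (a : α) :
    Nat.card {x : α // x ≠ a} = Nat.card α - 1 := by
  classical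
  have := Fintype.ofFinite α
  simp only [ne_eq, Nat.card_eq_fintype_card, Fintype.card_subtype_compl, Fintype.card_unique]

theorem Matrix.card_nonzero_orthogonal_pairs {n K : Type*} [Fintype n] [Field K] [Finite K] :
    Nat.card {p : (n → K) × (n → K) // p.1 ≠ 0 ∧ p.2 ≠ 0 ∧ p.2 ⬝ᵥ p.1 = 0} =
      (Nat.card K ^ Fintype.card n - 1) * (Nat.card K ^ (Fintype.card n - 1) - 1) := by
  classical
  have hker (u : {u : n → K // u ≠ 0}) :
      Nat.card {w : n → K // w ≠ 0 ∧ w ⬝ᵥ u.1 = 0} = Nat.card K ^ (Fintype.card n - 1) - 1 := by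
    let f := dotProductEquiv K n u
    have hmem {w : n → K} : w ∈ LinearMap.ker f ↔ w ⬝ᵥ u.1 = 0 := by
      rw [LinearMap.mem_ker, dotProductEquiv_apply_apply, dotProduct_comm]
    have hf : f ≠ 0 := (LinearEquiv.map_ne_zero_iff _).mpr u.2
    have hdim := Dual.finrank_ker_add_one_of_ne_zero hf
    rw [finrank_fintype_fun_eq_card] at hdim
    calc Nat.card {w : n → K // w ≠ 0 ∧ w ⬝ᵥ u.1 = 0}
        = Nat.card {w : LinearMap.ker f // w ≠ 0} := Nat.card_congr
          { toFun w := ⟨⟨w.1, hmem.mpr w.2.2⟩, fun h => w.2.1 (congrArg Subtype.val h)⟩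
            invFun w := ⟨w.1.1, fun h => w.2 (Subtype.ext h), hmem.mp w.1.2⟩
            left_inv _ := rfl
            right_inv _ := rfl }
      _ = Nat.card K ^ (Fintype.card n - 1) - 1 := by
        rw [Nat.card_subtype_ne, natCard_eq_pow_finrank (K := K) (V := LinearMap.ker f), ← hdim,
          Nat.add_sub_cancel]
  have := Fintype.ofFinite K
  calc Nat.card {p : (n → K) × (n → K) // p.1 ≠ 0 ∧ p.2 ≠ 0 ∧ p.2 ⬝ᵥ p.1 = 0}
      = Nat.card (Σ u : {u : n → K // u ≠ 0}, {w : n → K // w ≠ 0 ∧ w ⬝ᵥ u.1 = 0}) :=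
        Nat.card_congr
          { toFun p := ⟨⟨p.1.1, p.2.1⟩, p.1.2, p.2.2⟩
            invFun s := ⟨(s.1.1, s.2.1), s.1.2, s.2.2⟩
            left_inv _ := rfl
            right_inv _ := rfl }
    _ = _ := by
      rw [Nat.card_sigma, Finset.sum_congr rfl fun u _ => hker u, Finset.sum_const,
        Finset.card_univ, ← Nat.card_eq_fintype_card, Nat.card_subtype_ne, smul_eq_mul,
        natCard_eq_pow_finrank (K := K) (V := n → K), finrank_fintype_fun_eq_card]

theorem Matrix.card_mul_self_eq_zero_ne_zero_mul {n K : Type*} [Fintype n] [Field K] [Finite K]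
    (hn : Fintype.card n ≤ 3) :
    Nat.card {N : Matrix n n K // N * N = 0 ∧ N ≠ 0} * (Nat.card K - 1) =
      (Nat.card K ^ Fintype.card n - 1) * (Nat.card K ^ (Fintype.card n - 1) - 1) := by
  let P := {p : (n → K) × (n → K) // p.1 ≠ 0 ∧ p.2 ≠ 0 ∧ p.2 ⬝ᵥ p.1 = 0}
  let S := {N : Matrix n n K // N * N = 0 ∧ N ≠ 0}
  have hsq (u w : n → K) : vecMulVec u w * vecMulVec u w = (w ⬝ᵥ u) • vecMulVec u w := by
    rw [vecMulVec_mul_vecMulVec, vecMulVec_smul]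
  let Φ (p : P) : S := ⟨vecMulVec p.1.1 p.1.2, by rw [hsq, p.2.2.2, zero_smul],
    vecMulVec_eq_zero.not.mpr (not_or.mpr ⟨p.2.1, p.2.2.1⟩)⟩
  have hfiber (N : S) : Nat.card {p : P // Φ p = N} = Nat.card Kˣ := by
    obtain ⟨N, hN2, hN0⟩ := N
    obtain ⟨u, w, rfl⟩ := exists_eq_vecMulVec_of_mul_self_eq_zero hn hN2
    obtain ⟨hu, hw⟩ := not_or.mp (vecMulVec_eq_zero.not.mp hN0)
    have hwu : w ⬝ᵥ u = 0 := by
      rw [hsq] at hN2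
      exact (smul_eq_zero.mp hN2).resolve_right hN0
    symm
    refine Nat.card_eq_of_bijective (fun c => ⟨⟨(c • u, c⁻¹ • w), (smul_ne_zero_iff_ne c).mpr hu,
      (smul_ne_zero_iff_ne c⁻¹).mpr hw, ?_⟩,
      Subtype.ext ((vecMulVec_eq_vecMulVec_iff hu hw).mpr ⟨c, rfl, rfl⟩)⟩) ⟨?_, ?_⟩
    · simp only [Units.smul_def, smul_dotProduct, dotProduct_smul, hwu, smul_zero]
    · intro c d h
      exact Units.ext (smul_left_injective K hu (congrArg (fun x => x.1.1.1) h))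
    · rintro ⟨⟨⟨u', w'⟩, _⟩, hΦ⟩
      obtain ⟨c, rfl, rfl⟩ := (vecMulVec_eq_vecMulVec_iff hu hw).mp (congrArg Subtype.val hΦ)
      exact ⟨c, rfl⟩
  have := Fintype.ofFinite K
  classical
  calc Nat.card S * (Nat.card K - 1) = ∑ N : S, Nat.card {p : P // Φ p = N} := by
        rw [Finset.sum_congr rfl fun N _ => hfiber N, Finset.sum_const, Finset.card_univ,
          Nat.card_units, smul_eq_mul, Nat.card_eq_fintype_card (α := S)]
    _ = Nat.card P := by rw [← Nat.card_sigma, Nat.card_congr (Equiv.sigmaFiberEquiv Φ)]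
    _ = _ := card_nonzero_orthogonal_pairs

theorem card_involutions_PSL34 :
    Nat.card {x : PSL34 // orderOf x = 2} = 315 := by
  have hS := card_mul_self_eq_zero_ne_zero_mul (n := Fin 3) (K := GaloisField 2 2) le_rfl
  rw [GaloisField.card 2 2 two_ne_zero, Fintype.card_fin] at hS
  calc Nat.card {x : PSL34 // orderOf x = 2}
      = Nat.card {g : SpecialLinearGroup (Fin 3) (GaloisField 2 2) // orderOf g = 2} :=
        card_orderOf_eq_two_quotient_center (n := 3) (by decide) fun _ hz =>
          SpecialLinearGroup.pow_card_eq_one_of_mem_center hz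
    _ = Nat.card {N : Matrix (Fin 3) (Fin 3) (GaloisField 2 2) // N * N = 0 ∧ N ≠ 0} := by
        rw [SpecialLinearGroup.card_orderOf_eq_two_of_charP_two,
          CharTwo.card_mul_self_eq_one_eq_card_mul_self_eq_zero]
    _ = 315 := by omega
end

section
/- For an odd prime power q with q ≡ ±1 (mod 8), the number of involutions in PSL(2,q) equals q(q+ε)/2, where ε = ±1 satisfies q ≡ ε (mod 8). -/
/-!
In odd characteristic the image of `A ∈ SL(2, F)` in `PSL(2, F)` is an involution iff
`A² = ±1` and `A ≠ ±1`. By Cayley–Hamilton `A² = tr(A) • A - 1`, so this happens exactly when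
`tr A = 0`, and every involution has the two trace-zero lifts `±A`. The trace-zero matrices
`!![a, b; c, -a]` with `b * c = -1 - a²` number `∑ₐ (q - 1 + q • [a² = -1]) = q (q + χ(-1))`,
`χ` the quadratic character, and `χ(-1) = ±1` according as `q ≡ ±1 (mod 4)`.
-/

open Matrix MatrixGroups Finset

namespace QuotientGroup

lemma orderOf_mk_eq_two_iff {G : Type*} [Group G] {N : Subgroup G} [N.Normal] {g : G} :
    orderOf (g : G ⧸ N) = 2 ↔ g ^ 2 ∈ N ∧ g ∉ N := by
  rw [orderOf_eq_prime_iff, ← mk_pow, eq_one_iff, Ne, eq_one_iff]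

end QuotientGroup

namespace FiniteField

variable {F : Type*} [Field F] [Fintype F] [DecidableEq F]

lemma natCard_mul_left_eq (b d : F) :
    Nat.card {c : F // b * c = d} =
      if b = 0 then (if d = 0 then Fintype.card F else 0) else 1 := by
  split_ifs with hb hd
  · simp [hb, hd]
  · simp [hb, Ne.symm hd]
  · rw [← Nat.card_unique (α := {c : F // c = b⁻¹ * d})]
    exact Nat.card_congr (Equiv.subtypeEquivRight fun c => (eq_inv_mul_iff_mul_eq₀ hb).symm)

lemma natCard_mul_eq (d : F) :
    (Nat.card {x : F × F // x.1 * x.2 = d} : ℤ) =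
      Fintype.card F - 1 + if d = 0 then (Fintype.card F : ℤ) else 0 := by
  rw [Nat.card_congr (Equiv.subtypeProdEquivSigmaSubtype fun b c => b * c = d), Nat.card_sigma]
  simp only [natCard_mul_left_eq]
  push_cast
  rw [sum_ite, filter_eq', filter_ne', if_pos (mem_univ _), sum_singleton, sum_const,
    card_erase_of_mem (mem_univ _), card_univ, nsmul_one, Nat.cast_sub Fintype.card_pos]
  ring

end FiniteField

namespace Matrix

variable {R : Type*} [CommRing R]

lemma sq_eq_trace_smul_sub_det_smul (M : Matrix (Fin 2) (Fin 2) R) :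
    M ^ 2 = M.trace • M - M.det • 1 := by
  nontriviality R
  have h := M.aeval_self_charpoly
  rw [charpoly_fin_two] at h
  simp only [map_add, map_sub, map_pow, map_mul, Polynomial.aeval_X, Polynomial.aeval_C,
    Algebra.algebraMap_eq_smul_one, smul_one_mul] at h
  rw [← sub_eq_zero, ← h]
  abel

namespace SpecialLinearGroup

lemma coe_sq_eq_trace_smul_sub_one (A : SL(2, R)) :
    ((A ^ 2 : SL(2, R)) : Matrix (Fin 2) (Fin 2) R) =
      trace (A : Matrix (Fin 2) (Fin 2) R) • A - 1 := by
  rw [coe_pow, sq_eq_trace_smul_sub_det_smul, det_coe, one_smul]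

lemma mem_center_iff_exists_scalar {n : Type*} [Fintype n] [DecidableEq n]
    {A : SpecialLinearGroup n R} :
    A ∈ Subgroup.center (SpecialLinearGroup n R) ↔ ∃ r : R, scalar n r = A := by
  refine mem_center_iff.trans ⟨fun ⟨r, _, hr⟩ => ⟨r, hr⟩, fun ⟨r, hr⟩ => ⟨r, ?_, hr⟩⟩
  simpa [← hr] using A.det_coe

def traceZeroEquivSigma :
    {A : SL(2, R) // trace (A : Matrix (Fin 2) (Fin 2) R) = 0} ≃
      Σ a : R, {x : R × R // x.1 * x.2 = -1 - a ^ 2} where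
  toFun A := ⟨A.1 0 0, (A.1 0 1, A.1 1 0), by
    have hdet := A.1.det_coe
    have htr := A.2
    rw [det_fin_two] at hdet
    rw [trace_fin_two] at htr
    linear_combination -hdet + A.1 0 0 * htr⟩
  invFun v := ⟨⟨!![v.1, v.2.1.1; v.2.1.2, -v.1], by
      rw [det_fin_two_of]; linear_combination -v.2.2⟩, by simp [trace_fin_two]⟩
  left_inv A := by
    have htr := A.2
    rw [trace_fin_two, add_eq_zero_iff_eq_neg'] at htr
    ext : 2
    rw [eta_fin_two (A : Matrix (Fin 2) (Fin 2) R), htr]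
  right_inv _ := rfl

variable {F : Type*} [Field F]

lemma trace_ne_zero_of_mem_center (hF : ringChar F ≠ 2) {A : SL(2, F)}
    (hA : A ∈ Subgroup.center SL(2, F)) : trace (A : Matrix (Fin 2) (Fin 2) F) ≠ 0 := by
  obtain ⟨r, hr, hrA⟩ := mem_center_iff.mp hA
  have hr0 : r ≠ 0 := by rintro rfl; simp at hr
  simpa [← hrA, trace_fin_two, ← two_mul] using ⟨Ring.two_ne_zero hF, hr0⟩

lemma sq_mem_center_iff {A : SL(2, F)} :
    A ^ 2 ∈ Subgroup.center SL(2, F) ↔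
      trace (A : Matrix (Fin 2) (Fin 2) F) = 0 ∨ A ∈ Subgroup.center SL(2, F) := by
  constructor
  · intro hA2
    obtain ⟨r, hr⟩ := mem_center_iff_exists_scalar.mp hA2
    rw [coe_sq_eq_trace_smul_sub_one, eq_sub_iff_add_eq] at hr
    refine or_iff_not_imp_left.mpr fun ht => mem_center_iff_exists_scalar.mpr
      ⟨(trace (A : Matrix (Fin 2) (Fin 2) F))⁻¹ * (r + 1), ?_⟩
    calc scalar (Fin 2) ((trace (A : Matrix (Fin 2) (Fin 2) F))⁻¹ * (r + 1))
        = (trace (A : Matrix (Fin 2) (Fin 2) F))⁻¹ • (scalar (Fin 2) r + 1) := by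
          simp only [scalar_apply, ← smul_one_eq_diagonal, mul_smul, add_smul, one_smul]
      _ = A := by rw [hr, inv_smul_smul₀ ht]
  · rintro (ht | hA)
    · refine mem_center_iff_exists_scalar.mpr ⟨-1, ?_⟩
      rw [coe_sq_eq_trace_smul_sub_one, ht, zero_smul, zero_sub, map_neg, map_one]
    · exact Subgroup.pow_mem _ hA 2

lemma card_center_fin_two (hF : ringChar F ≠ 2) : Nat.card (Subgroup.center SL(2, F)) = 2 := by
  rw [Nat.card_congr (center_equiv_rootsOfUnity' 0).toEquiv, Fintype.card_fin]
  exact (IsPrimitiveRoot.neg_one (ringChar F) hF).card_rootsOfUnity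

variable [Fintype F] [DecidableEq F]

lemma natCard_trace_eq_zero (hF : ringChar F ≠ 2) :
    (Nat.card {A : SL(2, F) // trace (A : Matrix (Fin 2) (Fin 2) F) = 0} : ℤ) =
      Fintype.card F * (Fintype.card F + quadraticChar F (-1)) := by
  have hsqrt : (#{a : F | a ^ 2 = -1} : ℤ) = quadraticChar F (-1) + 1 := by
    simpa [Set.toFinset_ofPred] using quadraticChar_card_sqrts hF (-1)
  calc (Nat.card {A : SL(2, F) // trace (A : Matrix (Fin 2) (Fin 2) F) = 0} : ℤ)
      = ∑ a : F, (Fintype.card F - 1 + if a ^ 2 = -1 then (Fintype.card F : ℤ) else 0) := by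
        rw [Nat.card_congr traceZeroEquivSigma, Nat.card_sigma]
        push_cast
        have hroot (a : F) : -1 - a ^ 2 = 0 ↔ a ^ 2 = -1 := sub_eq_zero.trans eq_comm
        simp only [FiniteField.natCard_mul_eq, hroot]
    _ = Fintype.card F * (Fintype.card F - 1) + #{a : F | a ^ 2 = -1} * Fintype.card F := by
        simp only [sum_add_distrib, sum_sub_distrib, sum_const, card_univ, Int.nsmul_eq_mul,
          mul_one, sum_ite]
        ring
    _ = Fintype.card F * (Fintype.card F + quadraticChar F (-1)) := by
        rw [hsqrt]; ring

end SpecialLinearGroup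

namespace ProjectiveSpecialLinearGroup

variable {F : Type*} [Field F]

lemma orderOf_mk_eq_two_iff (hF : ringChar F ≠ 2) (A : SL(2, F)) :
    orderOf (A : PSL(2, F)) = 2 ↔ trace (A : Matrix (Fin 2) (Fin 2) F) = 0 := by
  rw [QuotientGroup.orderOf_mk_eq_two_iff, SpecialLinearGroup.sq_mem_center_iff]
  exact ⟨fun ⟨h, hA⟩ => h.resolve_right hA,
    fun ht => ⟨.inl ht, fun hA => SpecialLinearGroup.trace_ne_zero_of_mem_center hF hA ht⟩⟩

lemma card_trace_eq_zero_eq_two_mul (hF : ringChar F ≠ 2) :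
    Nat.card {A : SL(2, F) // trace (A : Matrix (Fin 2) (Fin 2) F) = 0} =
      2 * Nat.card {x : PSL(2, F) // orderOf x = 2} := by
  have h : {A : SL(2, F) | trace (A : Matrix (Fin 2) (Fin 2) F) = 0} =
      QuotientGroup.mk ⁻¹' {x : PSL(2, F) | orderOf x = 2} :=
    Set.ext fun A => (orderOf_mk_eq_two_iff hF A).symm
  calc Nat.card {A : SL(2, F) // trace (A : Matrix (Fin 2) (Fin 2) F) = 0}
      = Nat.card (QuotientGroup.mk ⁻¹' {x : PSL(2, F) | orderOf x = 2}) := by rw [← h]; rfl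
    _ = 2 * Nat.card {x : PSL(2, F) // orderOf x = 2} := by
      rw [QuotientGroup.card_preimage_mk, SpecialLinearGroup.card_center_fin_two hF]; rfl

theorem two_mul_card_orderOf_eq_two [Fintype F] [DecidableEq F]
    (hF : ringChar F ≠ 2) :
    2 * (Nat.card {x : PSL(2, F) // orderOf x = 2} : ℤ) =
      Fintype.card F * (Fintype.card F + quadraticChar F (-1)) := by
  rw [← SpecialLinearGroup.natCard_trace_eq_zero hF, card_trace_eq_zero_eq_two_mul hF]
  push_cast
  rfl

end ProjectiveSpecialLinearGroup

end Matrix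

theorem card_involutions_PSL2_general (q : ℕ)
    (F : Type*) [Field F] [Fintype F] (hF : Fintype.card F = q)
    (ε : ℤ) (hε : ε = 1 ∨ ε = -1) (hmod : (q : ℤ) ≡ ε [ZMOD 8]) :
    2 * (Nat.card {x : Matrix.SpecialLinearGroup (Fin 2) F ⧸
            Subgroup.center (Matrix.SpecialLinearGroup (Fin 2) F) //
          orderOf x = 2} : ℤ)
      = q * (q + ε) := by
  classical
  have h8 : (q : ℤ) % 8 = ε % 8 := hmod
  have hF2 : ringChar F ≠ 2 := by
    rw [Ne, FiniteField.even_card_iff_char_two, hF]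
    omega
  have hχ : quadraticChar F (-1) = ε := by
    rw [quadraticChar_neg_one hF2, hF]
    rcases hε with rfl | rfl
    · exact ZMod.χ₄_nat_one_mod_four (by omega)
    · exact ZMod.χ₄_nat_three_mod_four (by omega)
  rw [ProjectiveSpecialLinearGroup.two_mul_card_orderOf_eq_two hF2, hF, hχ]

/-- For `q = p^n > 3` a power of an odd prime with `q ≡ ε (mod 8)` where
`ε = ±1`, the number of involutions of `PSL(2,q)` is `q(q+ε)/2`
(stated multiplicatively). -/
theorem card_involutions_PSL2 (p n q : ℕ) (hp : p.Prime) (hpodd : Odd p)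
    (hn : 0 < n) (hq : q = p ^ n) (hq3 : 3 < q)
    (F : Type*) [Field F] [Fintype F] (hF : Fintype.card F = q)
    (ε : ℤ) (hε : ε = 1 ∨ ε = -1) (hmod : (q : ℤ) ≡ ε [ZMOD 8]) :
    2 * (Nat.card {x : Matrix.SpecialLinearGroup (Fin 2) F ⧸
            Subgroup.center (Matrix.SpecialLinearGroup (Fin 2) F) //
          orderOf x = 2} : ℤ)
      = q * (q + ε) :=
  card_involutions_PSL2_general q F hF ε hε hmod
end

section
/- For an odd prime power q with q ≡ -1 (mod 4), the number of involutions in PSL(3,q) equals q^2(q^2+q+1). -/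
/-!
The center of `SL(3, q)` consists of scalars `ζ` with `ζ ^ 3 = 1`, so it has odd exponent and the
involutions of `PSL(3, q)` lift uniquely to involutions of `SL(3, q)`. As `q` is odd, an involution
`A` is determined by the idempotent `P = (1 + A) / 2`, and `det A = 1`, `A ≠ 1` force `P` to have
rank one, that is `P = v wᵀ` with `wᵀ v = 1`. Each such `P` comes from exactly `q - 1` of the
`(q³ - 1) q²` pairs `(v, w)`, namely the pairs `(c v, c⁻¹ w)`, whence `q² (q² + q + 1)` involutions.
-/

open Matrix

theorem card_orderOf_eq_two_quotient_of_odd_exponent {G : Type*} [Group G] {Z : Subgroup G}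
    [Z.Normal] (hZ : Z ≤ Subgroup.center G) {m : ℕ} (hm : Odd m) (hZm : ∀ z ∈ Z, z ^ m = 1) :
    Nat.card {x : G ⧸ Z // orderOf x = 2} = Nat.card {g : G // orderOf g = 2} := by
  have eq_one_of_sq {z : G} (hz : z ∈ Z) (hz2 : z ^ 2 = 1) : z = 1 :=
    (pow_eq_one_iff_of_coprime hm.coprime_two_right).mp ⟨hZm z hz, hz2⟩
  let π : {g : G // orderOf g = 2} → {x : G ⧸ Z // orderOf x = 2} := fun g =>
    ⟨g.1, by
      obtain ⟨hg2, hg1⟩ := orderOf_eq_prime_iff.mp g.2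
      refine orderOf_eq_prime_iff.mpr ⟨by rw [← QuotientGroup.mk_pow, hg2]; rfl, fun h => hg1 ?_⟩
      exact eq_one_of_sq ((QuotientGroup.eq_one_iff _).mp h) hg2⟩
  refine (Nat.card_eq_of_bijective π ⟨?_, ?_⟩).symm
  · rintro ⟨g, hg⟩ ⟨h, hh⟩ hgh
    obtain ⟨z, hz, rfl⟩ : ∃ z ∈ Z, h = g * z :=
      ⟨g⁻¹ * h, QuotientGroup.eq.mp (congrArg Subtype.val hgh), by group⟩
    have hz2 : z ^ 2 = 1 := by
      have hcomm : Commute g z := Subgroup.mem_center_iff.mp (hZ hz) g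
      calc z ^ 2 = g ^ 2 * z ^ 2 := by rw [(orderOf_eq_prime_iff.mp hg).1, one_mul]
        _ = (g * z) ^ 2 := (hcomm.mul_pow 2).symm
        _ = 1 := (orderOf_eq_prime_iff.mp hh).1
    simp [eq_one_of_sq hz hz2]
  · rintro ⟨x, hx⟩
    obtain ⟨hx2, hx1⟩ := orderOf_eq_prime_iff.mp hx
    obtain ⟨g, rfl⟩ := QuotientGroup.mk_surjective x
    obtain ⟨k, rfl⟩ := hm
    have hg2 : g ^ 2 ∈ Z := by rwa [← QuotientGroup.eq_one_iff, QuotientGroup.mk_pow]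
    have hmk : ((g ^ (2 * k + 1) : G) : G ⧸ Z) = g := by
      rw [QuotientGroup.mk_pow, pow_succ, pow_mul, hx2, one_pow, one_mul]
    refine ⟨⟨g ^ (2 * k + 1), orderOf_eq_prime_iff.mpr ⟨?_, fun h => hx1 ?_⟩⟩, Subtype.ext hmk⟩
    · rw [← pow_mul, mul_comm, pow_mul, hZm _ hg2]
    · rw [← hmk, h, QuotientGroup.mk_one]

theorem IsIdempotentElem.two_smul_sub_one_mul_self {R A : Type*} [CommRing R] [Ring A]
    [Algebra R A] {p : A} (hp : IsIdempotentElem p) :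
    ((2 : R) • p - 1) * ((2 : R) • p - 1) = 1 := by
  simp only [sub_mul, mul_sub, hp.eq, mul_one, one_mul, smul_mul_assoc, mul_smul_comm]
  module

theorem isIdempotentElem_two_inv_smul_one_add {K A : Type*} [Field K] [Ring A] [Algebra K A]
    (h2 : (2 : K) ≠ 0) {a : A} (ha : a * a = 1) : IsIdempotentElem ((2 : K)⁻¹ • (1 + a)) := by
  have : (1 + a) * (1 + a) = (2 : K) • (1 + a) := by
    simp only [add_mul, mul_add, one_mul, mul_one, ha]
    module
  rw [IsIdempotentElem, smul_mul_smul, this, smul_smul, mul_assoc, inv_mul_cancel₀ h2, mul_one]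

namespace Matrix

namespace SpecialLinearGroup

variable {n R : Type*} [Fintype n] [DecidableEq n] [CommRing R]

theorem pow_card_eq_one_of_mem_center_s16 {A : SpecialLinearGroup n R}
    (hA : A ∈ Subgroup.center (SpecialLinearGroup n R)) : A ^ Fintype.card n = 1 := by
  obtain ⟨r, hr, hrA⟩ := mem_center_iff.mp hA
  ext : 1
  rw [coe_pow, ← hrA, ← map_pow, hr, map_one, coe_one]

theorem orderOf_eq_two_iff {g : SpecialLinearGroup n R} :
    orderOf g = 2 ↔ (g : Matrix n n R) * g = 1 ∧ (g : Matrix n n R) ≠ 1 := by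
  have hinj : Function.Injective ((↑) : SpecialLinearGroup n R → Matrix n n R) :=
    Subtype.coe_injective
  rw [orderOf_eq_prime_iff, ← coe_one, ← sq, ← coe_pow]
  exact and_congr hinj.eq_iff.symm hinj.ne_iff.symm

end SpecialLinearGroup

variable {K : Type*} [Field K] {n : Type*} [Fintype n]

theorem rank_eq_zero_iff {m : Type*} {A : Matrix m n K} : A.rank = 0 ↔ A = 0 := by
  classical
  rw [rank, Submodule.finrank_eq_zero, LinearMap.range_eq_bot, ← toLin'_apply',
    LinearEquiv.map_eq_zero_iff]

theorem isIdempotentElem_vecMulVec {R : Type*} [CommRing R] {v w : n → R} (h : w ⬝ᵥ v = 1) :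
    IsIdempotentElem (vecMulVec v w) := by
  rw [IsIdempotentElem, vecMulVec_mul_vecMulVec, h, one_smul]

theorem dotProduct_eq_one_of_isIdempotentElem_vecMulVec {v w : n → K}
    (h : IsIdempotentElem (vecMulVec v w)) (h0 : vecMulVec v w ≠ 0) : w ⬝ᵥ v = 1 := by
  have : (w ⬝ᵥ v - 1) • vecMulVec v w = 0 := by
    rw [sub_smul, one_smul, ← vecMulVec_smul, ← vecMulVec_mul_vecMulVec, h.eq, sub_self]
  exact sub_eq_zero.mp ((smul_eq_zero.mp this).resolve_right h0)

theorem rank_vecMulVec_of_dotProduct_eq_one {v w : n → K} (h : w ⬝ᵥ v = 1) :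
    (vecMulVec v w).rank = 1 := by
  refine le_antisymm (rank_vecMulVec_le v w) (Nat.one_le_iff_ne_zero.mpr fun h0 => ?_)
  rcases vecMulVec_eq_zero.mp (rank_eq_zero_iff.mp h0) with rfl | rfl <;> simp at h

theorem exists_unit_of_vecMulVec_eq {v w v' w' : n → K} (hwv : w ⬝ᵥ v = 1)
    (hwv' : w' ⬝ᵥ v' = 1) (h : vecMulVec v w = vecMulVec v' w') :
    ∃ c : Kˣ, v' = (c : K) • v ∧ w' = ((c⁻¹ : Kˣ) : K) • w := by
  have hv : v = (w' ⬝ᵥ v) • v' := by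
    simpa [vecMulVec_mulVec, hwv] using congrArg (· *ᵥ v) h
  have hw : w = (w ⬝ᵥ v') • w' := by
    simpa [vecMul_vecMulVec, hwv] using congrArg (w ᵥ* ·) h
  set a := w' ⬝ᵥ v
  set b := w ⬝ᵥ v'
  have hba : b * a = 1 :=
    calc b * a = (b • w') ⬝ᵥ (a • v') := by
          rw [smul_dotProduct, dotProduct_smul, hwv', smul_eq_mul, smul_eq_mul, mul_one]
      _ = 1 := by rw [← hw, ← hv, hwv]
  refine ⟨⟨b, a, hba, by rwa [mul_comm]⟩, ?_, ?_⟩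
  · change v' = b • v
    rw [hv, smul_smul, hba, one_smul]
  · change w' = a • w
    rw [hw, smul_smul, mul_comm, hba, one_smul]

theorem det_one_sub_two_smul_vecMulVec {R : Type*} [CommRing R] [DecidableEq n] (v w : n → R) :
    det (1 - (2 : R) • vecMulVec v w) = 1 - 2 * (w ⬝ᵥ v) := by
  rw [sub_eq_add_neg, ← neg_smul, ← smul_vecMulVec, vecMulVec_eq Unit,
    det_one_add_replicateCol_mul_replicateRow, dotProduct_smul, smul_eq_mul]
  ring

variable [DecidableEq n]

theorem rank_add_rank_one_sub_of_isIdempotentElem {P : Matrix n n K} (hP : IsIdempotentElem P) :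
    P.rank + (1 - P).rank = Fintype.card n := by
  have hP' : IsIdempotentElem (toLin' P) := by
    rw [IsIdempotentElem, Module.End.mul_eq_comp, ← toLin'_mul, hP.eq]
  rw [rank, rank, ← toLin'_apply', ← toLin'_apply', map_sub, toLin'_one, ← Module.End.one_eq_id,
    ← LinearMap.IsIdempotentElem.ker_eq_range_one_sub hP',
    LinearMap.finrank_range_add_finrank_ker, Module.finrank_fintype_fun_eq_card]

theorem exists_eq_vecMulVec_of_rank_eq_one {m : Type*} {A : Matrix m n K} (h : A.rank = 1) :
    ∃ v w, A = vecMulVec v w := by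
  rw [rank] at h
  obtain ⟨v, -, hspan⟩ := finrank_eq_one_iff'.mp h
  choose w hw using fun j => hspan ⟨A.col j, A.mulVec_single_one j ▸ LinearMap.mem_range_self _ _⟩
  refine ⟨v.1, w, ext fun i j => ?_⟩
  have := congrFun (congrArg Subtype.val (hw j)) i
  simp only [SetLike.val_smul, Pi.smul_apply, smul_eq_mul, col_apply] at this
  rw [vecMulVec_apply, ← this, mul_comm]

theorem exists_eq_vecMulVec_of_isIdempotentElem_of_rank_eq_one {P : Matrix n n K}
    (hP : IsIdempotentElem P) (h : P.rank = 1) : ∃ v w, w ⬝ᵥ v = 1 ∧ P = vecMulVec v w := by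
  obtain ⟨v, w, rfl⟩ := exists_eq_vecMulVec_of_rank_eq_one h
  refine ⟨v, w, dotProduct_eq_one_of_isIdempotentElem_vecMulVec hP fun h0 => ?_, rfl⟩
  simp [h0] at h

theorem det_two_smul_sub_one_of_rank_eq_one {P : Matrix n n K} (hP : IsIdempotentElem P)
    (h : P.rank = 1) : det ((2 : K) • P - 1) = (-1) ^ (Fintype.card n + 1) := by
  obtain ⟨v, w, hwv, rfl⟩ := exists_eq_vecMulVec_of_isIdempotentElem_of_rank_eq_one hP h
  rw [← neg_sub, det_neg, det_one_sub_two_smul_vecMulVec, hwv]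
  ring

theorem rank_eq_one_of_det_two_smul_sub_one_eq_one (h2 : (2 : K) ≠ 0)
    {P : Matrix (Fin 3) (Fin 3) K} (hP : IsIdempotentElem P) (hdet : det ((2 : K) • P - 1) = 1)
    (h1 : P ≠ 1) : P.rank = 1 := by
  have hsum := rank_add_rank_one_sub_of_isIdempotentElem hP
  have hneg : (-1 : K) ≠ 1 := fun h => h2 (by linear_combination -h)
  have hP0 : P.rank ≠ 0 := fun h0 => hneg <| by
    rw [rank_eq_zero_iff.mp h0, smul_zero, zero_sub, det_neg, det_one, Fintype.card_fin] at hdet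
    linear_combination hdet
  have hQ0 : (1 - P).rank ≠ 0 := fun h0 => h1 (sub_eq_zero.mp (rank_eq_zero_iff.mp h0)).symm
  have hQ1 : (1 - P).rank ≠ 1 := fun hQ => hneg <| by
    rw [show (2 : K) • P - 1 = -((2 : K) • (1 - P) - 1) by module, det_neg,
      det_two_smul_sub_one_of_rank_eq_one hP.one_sub hQ, Fintype.card_fin] at hdet
    linear_combination hdet
  simp only [Fintype.card_fin] at hsum
  omega

variable [Fintype K]

theorem card_dotProduct_eq_one {v : n → K} (hv : v ≠ 0) :
    Nat.card {w : n → K // w ⬝ᵥ v = 1} = Fintype.card K ^ (Fintype.card n - 1) := by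
  set φ : Module.Dual K (n → K) := dotProductEquiv K n v
  have hφ : φ ≠ 0 := (LinearEquiv.map_ne_zero_iff _).mpr hv
  obtain ⟨w₀, hw₀⟩ := LinearMap.surjective hφ 1
  have hfiber : {w : n → K // w ⬝ᵥ v = 1} ≃ φ.toAddMonoidHom ⁻¹' {φ.toAddMonoidHom w₀} :=
    Equiv.subtypeEquivRight fun w => by simp [φ, dotProduct_comm w, ← hw₀]
  have hker := Module.Dual.finrank_ker_add_one_of_ne_zero hφ
  rw [Module.finrank_fintype_fun_eq_card] at hker
  rw [Nat.card_congr (hfiber.trans (φ.toAddMonoidHom.fiberEquivKer w₀)),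
    ← LinearMap.ker_toAddSubgroup]
  change Nat.card (LinearMap.ker φ) = _
  rw [Module.natCard_eq_pow_finrank (K := K), ← hker, Nat.add_sub_cancel, Nat.card_eq_fintype_card]

theorem card_dotProduct_eq_one_pairs :
    Nat.card {p : (n → K) × (n → K) // p.2 ⬝ᵥ p.1 = 1} =
      (Fintype.card K ^ Fintype.card n - 1) * Fintype.card K ^ (Fintype.card n - 1) := by
  classical
  have hfiber (v : n → K) : Nat.card {w : n → K // w ⬝ᵥ v = 1} =
      if v = 0 then 0 else Fintype.card K ^ (Fintype.card n - 1) := by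
    split_ifs with hv
    · simp [hv]
    · exact card_dotProduct_eq_one hv
  rw [Nat.card_congr (Equiv.subtypeProdEquivSigmaSubtype fun v w => w ⬝ᵥ v = 1), Nat.card_sigma,
    Finset.sum_congr rfl fun v _ => hfiber v, Finset.sum_ite, Finset.sum_const_zero, zero_add,
    Finset.sum_const, smul_eq_mul, Finset.filter_ne', Finset.card_erase_of_mem (Finset.mem_univ _),
    Finset.card_univ, Fintype.card_fun]

theorem card_isIdempotentElem_rank_eq_one_mul :
    Nat.card {P : Matrix n n K // IsIdempotentElem P ∧ P.rank = 1} * (Fintype.card K - 1) =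
      (Fintype.card K ^ Fintype.card n - 1) * Fintype.card K ^ (Fintype.card n - 1) := by
  let Φ : {p : (n → K) × (n → K) // p.2 ⬝ᵥ p.1 = 1} →
      {P : Matrix n n K // IsIdempotentElem P ∧ P.rank = 1} := fun p =>
    ⟨vecMulVec p.1.1 p.1.2, isIdempotentElem_vecMulVec p.2, rank_vecMulVec_of_dotProduct_eq_one p.2⟩
  have hfiber (P) : Nonempty ({p // Φ p = P} ≃ Kˣ) := by
    obtain ⟨P, hP, hrank⟩ := P
    obtain ⟨v, w, hwv, rfl⟩ := exists_eq_vecMulVec_of_isIdempotentElem_of_rank_eq_one hP hrank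
    have hv : v ≠ 0 := by rintro rfl; simp at hwv
    refine ⟨(Equiv.ofBijective (fun c : Kˣ =>
      ⟨⟨((c : K) • v, ((c⁻¹ : Kˣ) : K) • w), ?dot⟩, Subtype.ext ?fiber⟩) ⟨?inj, ?surj⟩).symm⟩
    case dot => simp [hwv]
    case fiber => simp [Φ, smul_smul]
    case inj =>
      exact fun c c' hcc' => Units.ext (smul_left_injective K hv (congrArg (fun p => p.1.1.1) hcc'))
    case surj =>
      rintro ⟨⟨⟨v', w'⟩, hwv'⟩, hΦ⟩
      obtain ⟨c, rfl, rfl⟩ := exists_unit_of_vecMulVec_eq hwv hwv' (congrArg Subtype.val hΦ).symm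
      exact ⟨c, rfl⟩
  have e := ((Equiv.sigmaFiberEquiv Φ).symm.trans
    (Equiv.sigmaCongrRight fun P => (hfiber P).some)).trans (Equiv.sigmaEquivProd _ _)
  rw [← card_dotProduct_eq_one_pairs, Nat.card_congr e, Nat.card_prod, Nat.card_units,
    Nat.card_eq_fintype_card (α := K)]

end Matrix

theorem card_orderOf_eq_two_specialLinearGroup_fin_three {K : Type*} [Field K]
    (h2 : (2 : K) ≠ 0) :
    Nat.card {g : SpecialLinearGroup (Fin 3) K // orderOf g = 2} =
      Nat.card {P : Matrix (Fin 3) (Fin 3) K // IsIdempotentElem P ∧ P.rank = 1} := by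
  have two_smul_sub_one_eq_one {P : Matrix (Fin 3) (Fin 3) K} : (2 : K) • P - 1 = 1 ↔ P = 1 := by
    refine ⟨fun h => smul_right_injective _ h2 ?_, fun h => by rw [h]; module⟩
    linear_combination (norm := module) h
  let φ : {P : Matrix (Fin 3) (Fin 3) K // IsIdempotentElem P ∧ P.rank = 1} →
      {g : SpecialLinearGroup (Fin 3) K // orderOf g = 2} := fun P =>
    ⟨⟨(2 : K) • P.1 - 1, by rw [det_two_smul_sub_one_of_rank_eq_one P.2.1 P.2.2]; norm_num⟩,
      SpecialLinearGroup.orderOf_eq_two_iff.mpr ⟨P.2.1.two_smul_sub_one_mul_self, fun h => by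
        simpa [two_smul_sub_one_eq_one.mp h] using P.2.2⟩⟩
  refine (Nat.card_eq_of_bijective φ ⟨fun P Q hPQ => ?_, fun g => ?_⟩).symm
  · have := congrArg (fun g => (g.1 : Matrix (Fin 3) (Fin 3) K)) hPQ
    exact Subtype.ext (smul_right_injective _ h2 (sub_left_injective this))
  · obtain ⟨hA, hg1⟩ := SpecialLinearGroup.orderOf_eq_two_iff.mp g.2
    have hP := isIdempotentElem_two_inv_smul_one_add h2 hA
    have hAP : (2 : K) • (2 : K)⁻¹ • (1 + (g.1 : Matrix (Fin 3) (Fin 3) K)) - 1 = g.1 := by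
      rw [smul_smul, mul_inv_cancel₀ h2, one_smul, add_sub_cancel_left]
    refine ⟨⟨_, hP, rank_eq_one_of_det_two_smul_sub_one_eq_one h2 hP ?_ fun h => hg1 ?_⟩, ?_⟩
    · rw [hAP, g.1.2]
    · rw [← hAP, h, two_smul_sub_one_eq_one.mpr rfl]
    · exact Subtype.ext (Subtype.ext hAP)

theorem card_involutions_PSL3_general (q : ℕ) (hmod : q % 4 = 3)
    (F : Type*) [Field F] [Fintype F] (hF : Fintype.card F = q) :
    Nat.card {x : Matrix.SpecialLinearGroup (Fin 3) F ⧸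
          Subgroup.center (Matrix.SpecialLinearGroup (Fin 3) F) //
        orderOf x = 2}
      = q ^ 2 * (q ^ 2 + q + 1) := by
  have h2 : (2 : F) ≠ 0 := Ring.two_ne_zero fun hchar => by
    have := FiniteField.even_card_iff_char_two.mp hchar
    omega
  have hcenter (z) (hz : z ∈ Subgroup.center (SpecialLinearGroup (Fin 3) F)) : z ^ 3 = 1 :=
    SpecialLinearGroup.pow_card_eq_one_of_mem_center_s16 hz
  have hcount := card_isIdempotentElem_rank_eq_one_mul (n := Fin 3) (K := F)
  rw [Fintype.card_fin, hF] at hcount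
  rw [card_orderOf_eq_two_quotient_of_odd_exponent le_rfl (by decide) hcenter,
    card_orderOf_eq_two_specialLinearGroup_fin_three h2]
  refine Nat.eq_of_mul_eq_mul_right (m := q - 1) (by omega) (hcount.trans ?_)
  have hq : 1 ≤ q := by omega
  zify [hq, Nat.one_le_pow 3 q hq]
  ring

/-- For an odd prime power `q` with `q ≡ -1 (mod 4)`, the number of involutions
of `PSL(3,q)` is `q²(q² + q + 1)`. -/
theorem card_involutions_PSL3 (p n q : ℕ) (hp : p.Prime) (hpodd : Odd p)
    (hn : 0 < n) (hq : q = p ^ n) (hmod : q % 4 = 3)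
    (F : Type*) [Field F] [Fintype F] (hF : Fintype.card F = q) :
    Nat.card {x : Matrix.SpecialLinearGroup (Fin 3) F ⧸
          Subgroup.center (Matrix.SpecialLinearGroup (Fin 3) F) //
        orderOf x = 2}
      = q ^ 2 * (q ^ 2 + q + 1) :=
  card_involutions_PSL3_general q hmod F hF
end
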